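/- arXiv:1406.3140 — 3 statements merged into one kernel-verified Lean document; each statement's English description precedes it below -/
import Mathlib

section
/- Let n₁, …, n_m ≥ 0 be integers with 2^{n₁} + … + 2^{n_m} = 2^n. Let M be the union, over all partitions of {0,1}^n into cubical blocks of cardinalities 2^{n₁}, …, 2^{n_m}, of the mixtures of the independence models on the blocks. Then D_M ≤ Σ_{i : n_i > 1} (n_i - 1)/2^{n - n_i}. Equivalently: for every probability distribution p on {0,1}^n there exist a partition of {0,1}^n into cubical blocks X₁, …, X_m with |X_i| = 2^{n_i} and a mixture q = Σ_i α_i q_i of product distributions q_i supported on the respective blocks X_i such that D(p‖q) ≤ Σ_{i : n_i > 1} (n_i - 1)/2^{n - n_i}. -/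
open scoped BigOperators

noncomputable section

/-- The real value of a Boolean. -/
def bval (b : Bool) : ℝ := if b then 1 else 0

/-- `p` is a probability distribution on the finite set `X`. -/
def IsProb {X : Type*} [Fintype X] (p : X → ℝ) : Prop :=
  (∀ x, 0 ≤ p x) ∧ ∑ x, p x = 1

/-- One term of the Kullback-Leibler divergence (base-2 logarithm); terms with `a = 0` are `0`. -/
noncomputable def klTerm (a b : ℝ) : ℝ := if a = 0 then 0 else a * Real.logb 2 (a / b)

/-- Kullback-Leibler divergence with base-2 logarithm; it is `⊤ = ∞` if the support of `q`
does not contain the support of `p`. -/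
noncomputable def KL {X : Type*} [Fintype X] (p q : X → ℝ) : EReal :=
  if ∀ x, p x ≠ 0 → q x ≠ 0 then ((∑ x, klTerm (p x) (q x) : ℝ) : EReal) else ⊤

/-- The divergence from `p` to a set `M` of distributions: `inf_{q ∈ M} D(p‖q)`. -/
noncomputable def KLset {X : Type*} [Fintype X] (p : X → ℝ) (M : Set (X → ℝ)) : EReal :=
  ⨅ q ∈ M, KL p q

/-- The visible distribution `p_{W,C,B}` of an RBM with `n` visible and `m` hidden units. -/
noncomputable def rbmDist (n m : ℕ) (W : Matrix (Fin m) (Fin n) ℝ) (C : Fin m → ℝ)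
    (B : Fin n → ℝ) : (Fin n → Bool) → ℝ := fun v =>
  (∑ h : Fin m → Bool,
      Real.exp ((∑ j, ∑ i, bval (h j) * W j i * bval (v i)) +
        (∑ j, C j * bval (h j)) + (∑ i, B i * bval (v i)))) /
  (∑ v' : Fin n → Bool, ∑ h : Fin m → Bool,
      Real.exp ((∑ j, ∑ i, bval (h j) * W j i * bval (v' i)) +
        (∑ j, C j * bval (h j)) + (∑ i, B i * bval (v' i))))

/-- The RBM model `RBM_{n,m}`: the closure (in `ℝ^{{0,1}^n}`) of the set of visible
distributions representable with some choice of the parameters. -/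
noncomputable def RBM (n m : ℕ) : Set ((Fin n → Bool) → ℝ) :=
  closure { p | ∃ (W : Matrix (Fin m) (Fin n) ℝ) (C : Fin m → ℝ) (B : Fin n → ℝ),
    p = rbmDist n m W C B }

/-- `p` is a product distribution on `{0,1}^n`. -/
def IsProductDist {n : ℕ} (p : (Fin n → Bool) → ℝ) : Prop :=
  ∃ f : Fin n → Bool → ℝ, (∀ i, IsProb (f i)) ∧ ∀ v, p v = ∏ i, f i (v i)

/-- A face (cubical subset) of the `n`-cube: the coordinates outside `I` are fixed to `u`. -/
def IsFace {n : ℕ} (F : Set (Fin n → Bool)) : Prop :=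
  ∃ (I : Finset (Fin n)) (u : Fin n → Bool), F = {x | ∀ i ∉ I, x i = u i}

/-- An edge of the `n`-cube: a pair of vectors differing in exactly one entry. -/
def IsEdge {n : ℕ} (E : Set (Fin n → Bool)) : Prop :=
  ∃ (x : Fin n → Bool) (i : Fin n), E = {x, Function.update x i (!x i)}


/-! Sort the block sizes decreasingly and lay the blocks out as consecutive intervals of
`[0, 2^n)` in binary: each interval starts at a multiple of its length, so it is a face of the
cube, and translating all faces by any `z` (bitwise xor) gives another such partition. On a face
of mass `w` with `k` free coordinates, the product of the normalised marginals of `p` costs at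
most `w (k - 1)` bits. Every point lies in block `i` for exactly `2^{nᵢ}` of the `2^n` translates,
so the average over `z` of `∑ᵢ wᵢ (nᵢ - 1)` is the claimed bound and some translate attains it. -/

open Finset
open scoped symmDiff

section CubeFaces

variable {n m : ℕ}

def cubeFace (I : Finset (Fin n)) (u : Fin n → Bool) : Finset (Fin n → Bool) :=
  {x | ∀ j ∉ I, x j = u j}

theorem mem_cubeFace {I : Finset (Fin n)} {u x : Fin n → Bool} :
    x ∈ cubeFace I u ↔ ∀ j ∉ I, x j = u j := by
  simp [cubeFace]

theorem isFace_cubeFace (I : Finset (Fin n)) (u : Fin n → Bool) :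
    IsFace (cubeFace I u : Set (Fin n → Bool)) :=
  ⟨I, u, coe_filter_univ _⟩

theorem card_cubeFace (I : Finset (Fin n)) (u : Fin n → Bool) : #(cubeFace I u) = 2 ^ #I := by
  classical
  have hpi : cubeFace I u = Fintype.piFinset fun j => if j ∈ I then univ else {u j} := by
    ext x
    simp only [mem_cubeFace, Fintype.mem_piFinset]
    refine forall_congr' fun j => ?_
    split_ifs with hj <;> simp [hj]
  rw [hpi, Fintype.card_piFinset]
  simp [apply_ite card, prod_ite_mem]

theorem mem_cubeFace_symmDiff {I : Finset (Fin n)} {u x z : Fin n → Bool} :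
    x ∈ cubeFace I (u ∆ z) ↔ x ∆ z ∈ cubeFace I u := by
  have key : ∀ a b c : Bool, a = symmDiff b c ↔ symmDiff a c = b := by decide
  simp only [mem_cubeFace, Pi.symmDiff_apply, key]

theorem mem_cubeFace_symmDiff_comm {I : Finset (Fin n)} {u x z : Fin n → Bool} :
    x ∈ cubeFace I (u ∆ z) ↔ z ∈ cubeFace I (u ∆ x) := by
  have key : ∀ a b c : Bool, a = symmDiff b c ↔ c = symmDiff b a := by decide
  simp only [mem_cubeFace, Pi.symmDiff_apply, key]

theorem sum_sum_cubeFace_symmDiff (p : (Fin n → Bool) → ℝ) (I : Finset (Fin n))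
    (u : Fin n → Bool) :
    ∑ z, ∑ x ∈ cubeFace I (u ∆ z), p x = 2 ^ #I * ∑ x, p x := by
  rw [sum_comm' (t' := univ) (s' := fun x => cubeFace I (u ∆ x))
    (by simp [mem_cubeFace_symmDiff_comm])]
  simp [card_cubeFace, mul_sum]

def IsCubicalPartition (I : Fin m → Finset (Fin n)) (u : Fin m → Fin n → Bool) : Prop :=
  ∀ x, ∃! i, x ∈ cubeFace (I i) (u i)

namespace IsCubicalPartition

variable {I : Fin m → Finset (Fin n)} {u : Fin m → Fin n → Bool}

theorem symmDiff (h : IsCubicalPartition I u) (z : Fin n → Bool) :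
    IsCubicalPartition I fun i => u i ∆ z := fun x => by
  simpa only [mem_cubeFace_symmDiff] using h (x ∆ z)

theorem comp_equiv {m' : ℕ} (h : IsCubicalPartition I u) (σ : Fin m' ≃ Fin m) :
    IsCubicalPartition (I ∘ σ) (u ∘ σ) := fun x =>
  (σ.existsUnique_congr fun _ => Iff.rfl).2 (h x)

theorem disjoint (h : IsCubicalPartition I u) {i k : Fin m} (hik : i ≠ k) :
    Disjoint (cubeFace (I i) (u i)) (cubeFace (I k) (u k)) :=
  disjoint_left.2 fun x hi hk => hik ((h x).unique hi hk)

theorem sum_eq {M : Type*} [AddCommMonoid M] (h : IsCubicalPartition I u)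
    (f : (Fin n → Bool) → M) : ∑ x, f x = ∑ i, ∑ x ∈ cubeFace (I i) (u i), f x := by
  classical
  choose idx hidx huniq using h
  rw [← sum_fiberwise univ idx f]
  refine sum_congr rfl fun i _ => sum_congr (ext fun x => ?_) fun _ _ => rfl
  simp only [mem_filter, mem_univ, true_and]
  exact ⟨fun hx => hx ▸ hidx x, fun hx => (huniq x i hx).symm⟩

theorem sum_mul_eq (h : IsCubicalPartition I u) {α : Fin m → ℝ} {q : Fin m → (Fin n → Bool) → ℝ}
    (hq : ∀ i, ∀ x ∉ cubeFace (I i) (u i), q i x = 0) {i : Fin m} {x : Fin n → Bool}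
    (hx : x ∈ cubeFace (I i) (u i)) : ∑ k, α k * q k x = α i * q i x :=
  sum_eq_single i (fun k _ hki => by rw [hq k x fun hk => hki ((h x).unique hk hx), mul_zero])
    (by simp)

theorem kl_mixture_eq (h : IsCubicalPartition I u) (p : (Fin n → Bool) → ℝ) {α : Fin m → ℝ}
    {q : Fin m → (Fin n → Bool) → ℝ} (hq : ∀ i, ∀ x ∉ cubeFace (I i) (u i), q i x = 0)
    (hpos : ∀ i, ∀ x ∈ cubeFace (I i) (u i), p x ≠ 0 → α i * q i x ≠ 0) :
    KL p (fun x => ∑ i, α i * q i x) =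
      ((∑ i, ∑ x ∈ cubeFace (I i) (u i), klTerm (p x) (α i * q i x) : ℝ) : EReal) := by
  have hsupp : ∀ x, p x ≠ 0 → ∑ i, α i * q i x ≠ 0 := fun x hx => by
    obtain ⟨i, hi, -⟩ := h x
    rw [h.sum_mul_eq hq hi]
    exact hpos i x hi hx
  rw [KL, if_pos hsupp, h.sum_eq]
  exact congrArg _ (sum_congr rfl fun i _ => sum_congr rfl fun x hx => by rw [h.sum_mul_eq hq hx])

end IsCubicalPartition

end CubeFaces

section BinaryBlocks

variable {n m : ℕ}

def bits (n v : ℕ) : Fin n → Bool := fun j => v.testBit j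

theorem testBit_eq_iff_div_two_pow_eq {k v c : ℕ} (hv : v < 2 ^ n) (hc : c < 2 ^ n) :
    (∀ j : Fin n, k ≤ j → v.testBit j = c.testBit j) ↔ v / 2 ^ k = c / 2 ^ k := by
  constructor
  · refine fun h => Nat.eq_of_testBit_eq fun i => ?_
    rw [Nat.testBit_div_two_pow, Nat.testBit_div_two_pow]
    by_cases hik : i + k < n
    · exact h ⟨i + k, hik⟩ (Nat.le_add_left k i)
    · have hn : 2 ^ n ≤ 2 ^ (i + k) := Nat.pow_le_pow_right two_pos (not_lt.1 hik)
      rw [Nat.testBit_eq_false_of_lt (hv.trans_le hn), Nat.testBit_eq_false_of_lt (hc.trans_le hn)]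
  · intro h j hj
    have := congrArg (Nat.testBit · (j - k)) h
    simpa only [Nat.testBit_div_two_pow, Nat.sub_add_cancel hj] using this

theorem bits_injOn : Set.InjOn (bits n) (Set.Iio (2 ^ n)) := fun v hv w hw h => by
  simpa using (testBit_eq_iff_div_two_pow_eq (k := 0) hv hw).1 fun j _ => congrFun h j

theorem exists_bits_eq (x : Fin n → Bool) : ∃ v < 2 ^ n, bits n v = x := by
  have hbij : Function.Bijective fun v : Fin (2 ^ n) => bits n v :=
    (Fintype.bijective_iff_injective_and_card _).2
      ⟨fun v w h => Fin.ext (bits_injOn v.2 w.2 h), by simp⟩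
  obtain ⟨v, hv⟩ := hbij.2 x
  exact ⟨v, v.2, hv⟩

theorem bits_mem_cubeFace_iff {k v c : ℕ} (hv : v < 2 ^ n) (hc : c < 2 ^ n) (hkc : 2 ^ k ∣ c) :
    bits n v ∈ cubeFace {j | (j : ℕ) < k} (bits n c) ↔ c ≤ v ∧ v < c + 2 ^ k := by
  obtain ⟨t, rfl⟩ := hkc
  have hk : 0 < 2 ^ k := Nat.two_pow_pos k
  simp only [mem_cubeFace, mem_filter, mem_univ, true_and, not_lt, bits]
  rw [testBit_eq_iff_div_two_pow_eq hv hc, Nat.mul_div_cancel_left t hk, Nat.div_eq_iff hk,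
    mul_comm t]
  omega

theorem exists_isCubicalPartition_of_antitone {e : Fin m → ℕ} (he : Antitone e)
    (hsum : ∑ k, 2 ^ e k = 2 ^ n) :
    ∃ (I : Fin m → Finset (Fin n)) (u : Fin m → Fin n → Bool),
      (∀ k, #(I k) = e k) ∧ IsCubicalPartition I u := by
  set C : Fin m → ℕ := fun k => ∑ l : Fin k, 2 ^ e (Fin.castLE k.2.le l)
  have hsigma (s : (k : Fin m) × Fin (2 ^ e k)) : (finSigmaFinEquiv s : ℕ) = C s.1 + s.2 :=
    finSigmaFinEquiv_apply s
  have hC_lt (k : Fin m) : C k < 2 ^ n := by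
    simpa [hsigma, hsum] using (finSigmaFinEquiv (n := fun k => 2 ^ e k) ⟨k, 0, by simp⟩).2
  have hC_dvd (k : Fin m) : 2 ^ e k ∣ C k :=
    dvd_sum fun l _ => pow_dvd_pow 2 (he (Fin.le_def.2 (le_of_lt l.2)))
  have he_le (k : Fin m) : e k ≤ n :=
    (Nat.pow_le_pow_iff_right one_lt_two).1
      (hsum ▸ single_le_sum (f := fun k => 2 ^ e k) (by simp) (mem_univ k))
  refine ⟨fun k => {j | (j : ℕ) < e k}, fun k => bits n (C k), fun k => ?_, fun x => ?_⟩
  · rw [Fin.card_filter_val_lt, min_eq_right (he_le k)]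
  obtain ⟨v, hv, rfl⟩ := exists_bits_eq x
  simp only [bits_mem_cubeFace_iff hv (hC_lt _) (hC_dvd _)]
  obtain ⟨⟨k, j⟩, hkj⟩ := finSigmaFinEquiv.surjective (⟨v, hsum ▸ hv⟩ : Fin (∑ k, 2 ^ e k))
  have hvkj : v = C k + j := by simpa [hkj] using hsigma ⟨k, j⟩
  refine ⟨k, by omega, fun l hl => ?_⟩
  have hl : finSigmaFinEquiv (⟨l, v - C l, by omega⟩ : (k : Fin m) × Fin (2 ^ e k)) =
      finSigmaFinEquiv ⟨k, j⟩ := by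
    ext
    rw [hsigma, hkj]
    dsimp only
    omega
  exact congrArg Sigma.fst (finSigmaFinEquiv.injective hl)

theorem exists_isCubicalPartition {nv : Fin m → ℕ} (hsum : ∑ i, 2 ^ nv i = 2 ^ n) :
    ∃ (I : Fin m → Finset (Fin n)) (u : Fin m → Fin n → Bool),
      (∀ i, #(I i) = nv i) ∧ IsCubicalPartition I u := by
  set σ := Tuple.sort (OrderDual.toDual ∘ nv)
  have hanti : Antitone (nv ∘ σ) := monotone_toDual_comp_iff.1 (Tuple.monotone_sort _)
  obtain ⟨I, u, hI, hpart⟩ := exists_isCubicalPartition_of_antitone hanti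
    ((Equiv.sum_comp σ fun i => 2 ^ nv i).trans hsum)
  exact ⟨I ∘ σ.symm, u ∘ σ.symm, fun i => by simp [hI], hpart.comp_equiv σ.symm⟩

end BinaryBlocks

section Marginals

variable {n : ℕ}

theorem IsProductDist.isProb {q : (Fin n → Bool) → ℝ} (h : IsProductDist q) : IsProb q := by
  obtain ⟨f, hf, hq⟩ := h
  refine ⟨fun x => hq x ▸ prod_nonneg fun i _ => (hf i).1 (x i), ?_⟩
  simp only [hq, ← Fintype.prod_sum, (hf _).2, prod_const_one]

theorem neg_add_le_mul_logb_add_mul_logb {a b : ℝ} (ha : 0 ≤ a) (hb : 0 ≤ b) (hab : 0 < a + b) :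
    -(a + b) ≤ a * Real.logb 2 (a / (a + b)) + b * Real.logb 2 (b / (a + b)) := by
  have hlog2 : 0 < Real.log 2 := Real.log_pos one_lt_two
  have h1s : 1 - a / (a + b) = b / (a + b) := by field_simp; ring
  have hH := Real.binEntropy_le_log_two (p := a / (a + b))
  rw [Real.binEntropy, h1s, Real.log_inv, Real.log_inv] at hH
  have hsplit : a * Real.logb 2 (a / (a + b)) + b * Real.logb 2 (b / (a + b)) =
      (a + b) * (a / (a + b) * Real.log (a / (a + b)) + b / (a + b) * Real.log (b / (a + b))) /
        Real.log 2 := by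
    simp only [Real.logb]
    field_simp
  rw [hsplit, le_div_iff₀ hlog2]
  nlinarith

variable {p : (Fin n → Bool) → ℝ} {F : Finset (Fin n → Bool)}

def faceMarginal (p : (Fin n → Bool) → ℝ) (F : Finset (Fin n → Bool)) (j : Fin n) (b : Bool) :
    ℝ :=
  (∑ x ∈ F with x j = b, p x) / ∑ x ∈ F, p x

def marginalProduct (p : (Fin n → Bool) → ℝ) (F : Finset (Fin n → Bool)) (x : Fin n → Bool) :
    ℝ :=
  ∏ j, faceMarginal p F j (x j)

theorem sum_filter_true_add_sum_filter_false (F : Finset (Fin n → Bool)) (j : Fin n) :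
    ∑ x ∈ F with x j = true, p x + ∑ x ∈ F with x j = false, p x = ∑ x ∈ F, p x := by
  simpa only [Bool.not_eq_true] using sum_filter_add_sum_filter_not F (fun x => x j = true) p

theorem isProductDist_marginalProduct (hp : ∀ x, 0 ≤ p x) (hw : 0 < ∑ x ∈ F, p x) :
    IsProductDist (marginalProduct p F) := by
  refine ⟨faceMarginal p F, fun j => ⟨fun b => ?_, ?_⟩, fun _ => rfl⟩
  · exact div_nonneg (sum_nonneg fun x _ => hp x) hw.le
  · rw [Fintype.sum_bool, faceMarginal, faceMarginal, ← add_div,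
      sum_filter_true_add_sum_filter_false, div_self hw.ne']

theorem le_mul_faceMarginal (hp : ∀ x, 0 ≤ p x) (hw : ∑ x ∈ F, p x ≠ 0) {x : Fin n → Bool}
    (hx : x ∈ F) (j : Fin n) : p x ≤ (∑ y ∈ F, p y) * faceMarginal p F j (x j) := by
  rw [faceMarginal, mul_div_cancel₀ _ hw]
  exact single_le_sum (fun y _ => hp y) (mem_filter.2 ⟨hx, rfl⟩)

theorem faceMarginal_pos (hp : ∀ x, 0 ≤ p x) (hw : 0 < ∑ x ∈ F, p x) {x : Fin n → Bool}
    (hx : x ∈ F) (hpx : 0 < p x) (j : Fin n) : 0 < faceMarginal p F j (x j) :=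
  pos_of_mul_pos_right (hpx.trans_le (le_mul_faceMarginal hp hw.ne' hx j)) hw.le

theorem marginalProduct_eq_zero {I : Finset (Fin n)} {u x : Fin n → Bool}
    (hx : x ∉ cubeFace I u) : marginalProduct p (cubeFace I u) x = 0 := by
  obtain ⟨j, hj, hxj⟩ : ∃ j ∉ I, x j ≠ u j := by simpa [mem_cubeFace] using hx
  refine prod_eq_zero (mem_univ j) ?_
  rw [faceMarginal, sum_eq_zero fun y hy => ?_, zero_div]
  obtain ⟨hyF, hyx⟩ := mem_filter.1 hy
  exact (hxj (hyx ▸ mem_cubeFace.1 hyF j hj)).elim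

theorem faceMarginal_cubeFace_self {I : Finset (Fin n)} {u : Fin n → Bool} {j : Fin n}
    (hj : j ∉ I) (hw : ∑ x ∈ cubeFace I u, p x ≠ 0) :
    faceMarginal p (cubeFace I u) j (u j) = 1 := by
  rw [faceMarginal, filter_true_of_mem fun x hx => mem_cubeFace.1 hx j hj, div_self hw]

theorem neg_sum_le_sum_mul_logb_faceMarginal (hp : ∀ x, 0 ≤ p x) (hw : 0 < ∑ x ∈ F, p x)
    (j : Fin n) :
    -∑ x ∈ F, p x ≤ ∑ x ∈ F, p x * Real.logb 2 (faceMarginal p F j (x j)) := by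
  have hfiber (b : Bool) : ∑ x ∈ F with x j = b, p x * Real.logb 2 (faceMarginal p F j (x j)) =
      (∑ x ∈ F with x j = b, p x) * Real.logb 2 (faceMarginal p F j b) := by
    rw [sum_mul]
    exact sum_congr rfl fun x hx => by rw [(mem_filter.1 hx).2]
  rw [← sum_fiberwise F (· j) fun x => p x * Real.logb 2 (faceMarginal p F j (x j)),
    Fintype.sum_bool, hfiber, hfiber, faceMarginal, faceMarginal]
  rw [← sum_filter_true_add_sum_filter_false F j] at hw ⊢
  exact neg_add_le_mul_logb_add_mul_logb (sum_nonneg fun x _ => hp x)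
    (sum_nonneg fun x _ => hp x) hw

end Marginals

section FaceBound

variable {n : ℕ} {p : (Fin n → Bool) → ℝ}

theorem klTerm_mul_prod {ι : Type*} (s : Finset ι) {a w : ℝ} {g : ι → ℝ} (ha : 0 < a)
    (hw : 0 < w) (hg : ∀ j ∈ s, 0 < g j) :
    klTerm a (w * ∏ j ∈ s, g j) = a * Real.logb 2 (a / w) - ∑ j ∈ s, a * Real.logb 2 (g j) := by
  rw [klTerm, if_neg ha.ne', ← div_div, Real.logb_div (div_pos ha hw).ne'
    (prod_pos hg).ne', Real.logb_prod s g fun j hj => (hg j hj).ne', mul_sub, mul_sum]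

/-- With `w` the mass of the face and `P = p / w`, the left side is `w D(P ‖ ⊗ⱼ Pⱼ)` and
`D(P ‖ ⊗ⱼ Pⱼ) = ∑ⱼ H(Pⱼ) - H(P)`; bound `H(P) ≥ H(Pⱼ₀)` for one free coordinate `j₀` and
`H(Pⱼ) ≤ 1` for the others. The truncated `#I - 1` also covers `I = ∅`, a one-point face. -/
theorem sum_klTerm_marginalProduct_le (hp : ∀ x, 0 ≤ p x) {I : Finset (Fin n)}
    {u : Fin n → Bool} (hw : 0 < ∑ x ∈ cubeFace I u, p x) :
    ∑ x ∈ cubeFace I u,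
        klTerm (p x) ((∑ y ∈ cubeFace I u, p y) * marginalProduct p (cubeFace I u) x) ≤
      (∑ y ∈ cubeFace I u, p y) * ((#I - 1 : ℕ) : ℝ) := by
  set F := cubeFace I u
  set w := ∑ y ∈ F, p y
  set L := ∑ x ∈ F, p x * Real.logb 2 (p x / w)
  set T : Fin n → ℝ := fun j => ∑ x ∈ F, p x * Real.logb 2 (faceMarginal p F j (x j))
  have hdecomp : ∑ x ∈ F, klTerm (p x) (w * marginalProduct p F x) = L - ∑ j, T j := by
    rw [sum_comm, ← sum_sub_distrib]
    refine sum_congr rfl fun x hx => ?_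
    rcases (hp x).eq_or_lt with h0 | hpos
    · simp [klTerm, ← h0]
    · exact klTerm_mul_prod univ hpos hw fun j _ => faceMarginal_pos hp hw hx hpos j
  have hT_out (j : Fin n) (hj : j ∉ I) : T j = 0 := sum_eq_zero fun x hx => by
    rw [mem_cubeFace.1 hx j hj, faceMarginal_cubeFace_self hj hw.ne', Real.logb_one, mul_zero]
  have hL_le (j : Fin n) : L ≤ T j := sum_le_sum fun x hx => by
    rcases (hp x).eq_or_lt with h0 | hpos
    · simp [← h0]
    refine mul_le_mul_of_nonneg_left (Real.logb_le_logb_of_le one_lt_two (div_pos hpos hw) ?_)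
      hpos.le
    exact (div_le_iff₀' hw).2 (le_mul_faceMarginal hp hw.ne' hx j)
  have hL_nonpos : L ≤ 0 := sum_nonpos fun x hx =>
    mul_nonpos_of_nonneg_of_nonpos (hp x) <| Real.logb_nonpos one_lt_two
      (div_nonneg (hp x) hw.le) ((div_le_one hw).2 (single_le_sum (fun y _ => hp y) hx))
  have hT_ge (j : Fin n) : -w ≤ T j := neg_sum_le_sum_mul_logb_faceMarginal hp hw j
  rw [hdecomp, ← sum_subset (subset_univ I) fun j _ hj => hT_out j hj]
  rcases I.eq_empty_or_nonempty with rfl | ⟨j₀, hj₀⟩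
  · simpa using hL_nonpos
  calc L - ∑ j ∈ I, T j = (L - T j₀) + ∑ j ∈ I.erase j₀, -T j := by
        rw [← add_sum_erase I T hj₀, sum_neg_distrib]
        ring
    _ ≤ 0 + ∑ j ∈ I.erase j₀, w :=
        add_le_add (by linarith [hL_le j₀]) (sum_le_sum fun j _ => by linarith [hT_ge j])
    _ = w * ((#I - 1 : ℕ) : ℝ) := by
        rw [zero_add, sum_const, card_erase_of_mem hj₀, nsmul_eq_mul, mul_comm]

theorem exists_productDist_on_cubeFace (hp : ∀ x, 0 ≤ p x) (I : Finset (Fin n))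
    (u : Fin n → Bool) :
    ∃ q : (Fin n → Bool) → ℝ, IsProb q ∧ IsProductDist q ∧ (∀ x ∉ cubeFace I u, q x = 0) ∧
      (∀ x ∈ cubeFace I u, p x ≠ 0 → q x ≠ 0) ∧
      ∑ x ∈ cubeFace I u, klTerm (p x) ((∑ y ∈ cubeFace I u, p y) * q x) ≤
        (∑ y ∈ cubeFace I u, p y) * ((#I - 1 : ℕ) : ℝ) := by
  rcases (sum_nonneg fun x _ => hp x : 0 ≤ ∑ y ∈ cubeFace I u, p y).eq_or_lt with hw | hw
  · have hp0 : ∀ x ∈ cubeFace I u, p x = 0 :=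
      (sum_eq_zero_iff_of_nonneg fun x _ => hp x).1 hw.symm
    -- any product distribution on the face will do; take the one built from a point mass
    set δ : (Fin n → Bool) → ℝ := fun x => if x = u then 1 else 0
    have hδ : 0 < ∑ x ∈ cubeFace I u, δ x := by simp [δ, mem_cubeFace]
    have hprod := isProductDist_marginalProduct (fun x => by positivity) hδ
    refine ⟨_, hprod.isProb, hprod, fun x hx => marginalProduct_eq_zero hx,
      fun x hx hpx => (hpx (hp0 x hx)).elim, ?_⟩
    rw [← hw, zero_mul]
    exact (sum_eq_zero fun x hx => by simp [klTerm, hp0 x hx]).le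
  · have hprod := isProductDist_marginalProduct hp hw
    refine ⟨_, hprod.isProb, hprod, fun x hx => marginalProduct_eq_zero hx, fun x hx hpx => ?_,
      sum_klTerm_marginalProduct_le hp hw⟩
    exact (prod_pos fun j _ => faceMarginal_pos hp hw hx ((hp x).lt_of_ne' hpx) j).ne'

end FaceBound

theorem exists_symmDiff_sum_cubeFace_mul_le {n m : ℕ} {p : (Fin n → Bool) → ℝ}
    (hp : ∑ x, p x = 1) (I : Fin m → Finset (Fin n)) (u : Fin m → Fin n → Bool)
    (d : Fin m → ℝ) :
    ∃ z : Fin n → Bool,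
      ∑ i, (∑ x ∈ cubeFace (I i) (u i ∆ z), p x) * d i ≤ ∑ i, d i / 2 ^ (n - #(I i)) := by
  suffices hsum : ∑ z : Fin n → Bool, ∑ i, (∑ x ∈ cubeFace (I i) (u i ∆ z), p x) * d i =
      ∑ _z : Fin n → Bool, ∑ i, d i / 2 ^ (n - #(I i)) by
    obtain ⟨z, -, hz⟩ := exists_le_of_sum_le univ_nonempty hsum.le
    exact ⟨z, hz⟩
  rw [sum_comm, sum_const, card_univ, Fintype.card_fun, Fintype.card_bool, Fintype.card_fin,
    nsmul_eq_mul, mul_sum]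
  refine sum_congr rfl fun i _ => ?_
  have hI : #(I i) ≤ n := (card_le_univ _).trans_eq (Fintype.card_fin n)
  have hpow : (2 : ℝ) ^ n = 2 ^ #(I i) * 2 ^ (n - #(I i)) := by
    rw [← pow_add, Nat.add_sub_cancel' hI]
  rw [← sum_mul, sum_sum_cubeFace_symmDiff, hp, mul_one, Nat.cast_pow, Nat.cast_two, hpow]
  field_simp

theorem sum_filter_one_lt_cast_sub_one_div {ι : Type*} (s : Finset ι) (k : ι → ℕ) (c : ι → ℝ) :
    ∑ i ∈ s with 1 < k i, ((k i : ℝ) - 1) / c i = ∑ i ∈ s, ((k i - 1 : ℕ) : ℝ) / c i := by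
  rw [sum_filter]
  refine sum_congr rfl fun i _ => ?_
  split_ifs with h
  · rw [Nat.cast_sub h.le, Nat.cast_one]
  · rw [Nat.sub_eq_zero_of_le (not_lt.1 h), Nat.cast_zero, zero_div]

/-- (Lemma 3 of the paper.) Let `n₁,…,n_m ≥ 0` with `2^{n₁}+…+2^{n_m} = 2^n`.
For every probability distribution `p` on `{0,1}^n` there are a partition of `{0,1}^n` into
cubical blocks `X i` with `|X i| = 2^{nᵢ}` and a mixture `q = ∑ αᵢ qᵢ` of product
distributions `qᵢ` supported on the respective blocks such that
`D(p‖q) ≤ ∑_{i : nᵢ > 1} (nᵢ - 1)/2^{n - nᵢ}`. -/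
theorem kl_bound_mixture_cubical_blocks (n m : ℕ) (nv : Fin m → ℕ)
    (hsum : ∑ i, 2 ^ nv i = 2 ^ n)
    (p : (Fin n → Bool) → ℝ) (hp : IsProb p) :
    ∃ X : Fin m → Set (Fin n → Bool),
      (∀ i, IsFace (X i)) ∧ (∀ i, (X i).ncard = 2 ^ nv i) ∧
      (∀ i j, i ≠ j → Disjoint (X i) (X j)) ∧ (∀ v, ∃ i, v ∈ X i) ∧
      ∃ (α : Fin m → ℝ) (q : Fin m → (Fin n → Bool) → ℝ),
        (∀ i, 0 ≤ α i) ∧ (∑ i, α i = 1) ∧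
        (∀ i, IsProb (q i) ∧ IsProductDist (q i) ∧ ∀ x ∉ X i, q i x = 0) ∧
        KL p (fun v => ∑ i, α i * q i v) ≤
          ((∑ i ∈ Finset.univ.filter (fun i => 1 < nv i),
              ((nv i : ℝ) - 1) / 2 ^ (n - nv i) : ℝ) : EReal) := by
  obtain ⟨I, u, hI, hpart⟩ := exists_isCubicalPartition hsum
  obtain ⟨z, hz⟩ := exists_symmDiff_sum_cubeFace_mul_le hp.2 I u fun i => ((nv i - 1 : ℕ) : ℝ)
  set F := fun i => cubeFace (I i) (u i ∆ z)
  have hpartz : IsCubicalPartition I fun i => u i ∆ z := hpart.symmDiff z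
  choose q hq hqprod hqsupp hqpos hqkl using
    fun i => exists_productDist_on_cubeFace hp.1 (I i) (u i ∆ z)
  have hmix : ∀ i, ∀ x ∈ F i, p x ≠ 0 → (∑ y ∈ F i, p y) * q i x ≠ 0 := fun i x hx hpx =>
    mul_ne_zero ((lt_of_lt_of_le ((hp.1 x).lt_of_ne' hpx)
      (single_le_sum (fun y _ => hp.1 y) hx)).ne') (hqpos i x hx hpx)
  refine ⟨fun i => F i, fun i => isFace_cubeFace _ _, fun i => by simp [F, card_cubeFace, hI],
    fun i j hij => disjoint_coe.2 (hpartz.disjoint hij),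
    fun x => (hpartz x).exists.imp fun _ => mem_coe.2, fun i => ∑ x ∈ F i, p x, q,
    fun i => sum_nonneg fun x _ => hp.1 x, by rw [← hpartz.sum_eq, hp.2],
    fun i => ⟨hq i, hqprod i, hqsupp i⟩, ?_⟩
  rw [hpartz.kl_mixture_eq p hqsupp hmix, EReal.coe_le_coe_iff,
    sum_filter_one_lt_cast_sub_one_div]
  calc _ ≤ ∑ i, (∑ x ∈ F i, p x) * ((nv i - 1 : ℕ) : ℝ) :=
        sum_le_sum fun i _ => hI i ▸ hqkl i
    _ ≤ _ := by simpa only [hI] using hz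
end
end

section
/- For every real x > 0 and every real n: (n-1) - log₂(x) ≤ n - ⌊log₂(x)⌋ - x/2^{⌊log₂(x)⌋} ≤ (n-1) - log₂(x) + c, where c = -log₂(ln 2) - (1/ln 2 - 1) ≈ 0.086. -/
/-!
Write `log₂ x = k + s` with `k = ⌊log₂ x⌋` and `s = fract (log₂ x) ∈ [0, 1)`, so that
`x / 2^k = 2^s` and the middle expression equals `(n - 1) - log₂ x + (1 + s - 2^s)`.
The lower bound is `2^s ≤ 1 + s` on `[0, 1]` (Bernoulli, or convexity of `2^s`); the upper bound
says that `s - 2^s` is maximal where the derivative `1 - 2^s ln 2` vanishes, which follows from the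
tangent inequality `y + 1 ≤ exp y` at `y = s ln 2 + ln ln 2`.
-/

open scoped BigOperators

noncomputable section

open Real

lemma div_zpow_floor_logb {b x : ℝ} (hb : 0 < b) (hb1 : b ≠ 1) (hx : 0 < x) :
    x / b ^ ⌊logb b x⌋ = b ^ Int.fract (logb b x) := by
  rw [← Int.self_sub_floor, rpow_sub_intCast hb.ne', rpow_logb hb hb1 hx]

lemma two_rpow_le_one_add {s : ℝ} (hs0 : 0 ≤ s) (hs1 : s ≤ 1) : (2 : ℝ) ^ s ≤ 1 + s := by
  simpa [one_add_one_eq_two] using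
    rpow_one_add_le_one_add_mul_self (s := 1) (by norm_num) hs0 hs1

lemma sub_rpow_le {b : ℝ} (hb : 1 < b) (s : ℝ) :
    s - b ^ s ≤ -logb b (log b) - 1 / log b := by
  have hlog : 0 < log b := log_pos hb
  have tangent := add_one_le_exp (log b * s + log (log b))
  rw [exp_add, exp_log hlog, ← rpow_def_of_pos (by linarith)] at tangent
  have hdiv : s + logb b (log b) + 1 / log b ≤ b ^ s := by
    rw [logb, show s + log (log b) / log b + 1 / log b
        = (log b * s + log (log b) + 1) / log b by field_simp]
    exact div_le_of_le_mul₀ hlog.le (by positivity) tangent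
  linarith

/-- (Lemma 4 / Appendix lemma of the paper.) For all real `x > 0` and all
real `n`:
`(n-1) - log₂ x ≤ n - ⌊log₂ x⌋ - x/2^⌊log₂ x⌋ ≤ (n-1) - log₂ x + c`, where
`c = -log₂(ln 2) - (1/ln 2 - 1) ≈ 0.086`. -/
theorem floor_log_interpolation_bounds (x : ℝ) (hx : 0 < x) (n : ℝ) :
    (n - 1) - Real.logb 2 x ≤
      n - (⌊Real.logb 2 x⌋ : ℝ) - x / (2 : ℝ) ^ ⌊Real.logb 2 x⌋ ∧
    n - (⌊Real.logb 2 x⌋ : ℝ) - x / (2 : ℝ) ^ ⌊Real.logb 2 x⌋ ≤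
      (n - 1) - Real.logb 2 x +
        (-Real.logb 2 (Real.log 2) - (1 / Real.log 2 - 1)) := by
  rw [div_zpow_floor_logb two_pos (by norm_num) hx]
  have hsplit := Int.floor_add_fract (logb 2 x)
  have hlower := two_rpow_le_one_add (Int.fract_nonneg (logb 2 x)) (Int.fract_lt_one _).le
  have hupper := sub_rpow_le one_lt_two (Int.fract (logb 2 x))
  constructor <;> linarith
end
end

section
/- Let p = p_{W,C,B} be the visible distribution of an RBM with n visible and m-1 hidden units, and let F be a face of the n-cube such that the restriction of p to F is proportional to a product distribution on F. Then for every product distribution p̂ supported on F and every α ∈ [0,1], the mixture (1-α)·p + α·p̂ belongs to RBM_{n,m}. That is, appending one hidden unit allows to mix the current visible distribution with an arbitrary product distribution supported on any face on which the current distribution restricts to a product distribution. -/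
open scoped BigOperators

noncomputable section

/-! Adding a hidden unit with weights `w` and bias `c` multiplies the unnormalized visible weights
of an RBM by `1 + exp (c + w·v)`, and every nonnegative function of product form
`v ↦ a ∏ᵢ gᵢ(vᵢ)` is a pointwise limit of functions `v ↦ exp (c + w·v)`. Because `p = K exp (η·v)`
on `F` and `p̂` is a product distribution vanishing off `F`, the function `q = λ p̂ / p` has this
form, and `p (1 + q) = p + λ p̂` normalizes to the mixture with weight `α = λ / (1 + λ)`. The
remaining case `α = 1` follows since the model is closed. -/

open Set

def expAffine (n : ℕ) : Set ((Fin n → Bool) → ℝ) :=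
  {q | ∃ (c : ℝ) (w : Fin n → ℝ), ∀ v, q v = Real.exp (c + ∑ i, w i * bval (v i))}

theorem mem_expAffine_of_pos {n : ℕ} {a : ℝ} {g : Fin n → Bool → ℝ} (ha : 0 < a)
    (hg : ∀ i b, 0 < g i b) : (fun v => a * ∏ i, g i (v i)) ∈ expAffine n := by
  refine ⟨Real.log a + ∑ i, Real.log (g i false),
    fun i => Real.log (g i true) - Real.log (g i false), fun v => ?_⟩
  have hcoord : ∀ i, Real.log (g i false) + (Real.log (g i true) - Real.log (g i false)) *
      bval (v i) = Real.log (g i (v i)) := fun i => by cases v i <;> simp [bval]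
  rw [add_assoc, ← Finset.sum_add_distrib, Finset.sum_congr rfl fun i _ => hcoord i,
    Real.exp_add, Real.exp_log ha, Real.exp_sum]
  simp only [Real.exp_log (hg _ _)]

theorem mem_closure_expAffine_of_nonneg {n : ℕ} {a : ℝ} {g : Fin n → Bool → ℝ} (ha : 0 ≤ a)
    (hg : ∀ i b, 0 ≤ g i b) : (fun v => a * ∏ i, g i (v i)) ∈ closure (expAffine n) := by
  have hcont : Continuous fun ε : ℝ => fun v : Fin n → Bool => (a + ε) * ∏ i, (g i (v i) + ε) :=
    continuous_pi fun v => by fun_prop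
  have hlim := (hcont.tendsto 0).mono_left (nhdsWithin_le_nhds (s := Ioi 0))
  simp only [add_zero] at hlim
  refine mem_closure_of_tendsto hlim ?_
  filter_upwards [self_mem_nhdsWithin] with ε (hε : 0 < ε)
  exact mem_expAffine_of_pos (g := fun i b => g i b + ε) (by linarith)
    fun i b => by linarith [hg i b]

theorem nonneg_of_mem_closure_expAffine {n : ℕ} {q : (Fin n → Bool) → ℝ}
    (hq : q ∈ closure (expAffine n)) (v : Fin n → Bool) : 0 ≤ q v := by
  have hclosed : IsClosed {q : (Fin n → Bool) → ℝ | ∀ v, 0 ≤ q v} := by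
    simp only [ofPred_forall]
    exact isClosed_iInter fun v => isClosed_le continuous_const (continuous_apply v)
  refine closure_minimal (fun q hq v => ?_) hclosed hq v
  obtain ⟨c, w, hq⟩ := hq
  exact hq v ▸ (Real.exp_pos _).le

def rbmWeight (n m : ℕ) (W : Matrix (Fin m) (Fin n) ℝ) (C : Fin m → ℝ) (B : Fin n → ℝ)
    (v : Fin n → Bool) : ℝ :=
  ∑ h : Fin m → Bool, Real.exp ((∑ j, ∑ i, bval (h j) * W j i * bval (v i)) +
    (∑ j, C j * bval (h j)) + (∑ i, B i * bval (v i)))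

theorem rbmWeight_pos (n m : ℕ) (W : Matrix (Fin m) (Fin n) ℝ) (C : Fin m → ℝ) (B : Fin n → ℝ)
    (v : Fin n → Bool) : 0 < rbmWeight n m W C B v :=
  Finset.sum_pos (fun _ _ => Real.exp_pos _) Finset.univ_nonempty

theorem sum_rbmWeight_pos (n m : ℕ) (W : Matrix (Fin m) (Fin n) ℝ) (C : Fin m → ℝ)
    (B : Fin n → ℝ) : 0 < ∑ v, rbmWeight n m W C B v :=
  Finset.sum_pos (fun _ _ => rbmWeight_pos ..) Finset.univ_nonempty

theorem rbmDist_eq_rbmWeight_div (n m : ℕ) (W : Matrix (Fin m) (Fin n) ℝ) (C : Fin m → ℝ)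
    (B : Fin n → ℝ) (v : Fin n → Bool) :
    rbmDist n m W C B v = rbmWeight n m W C B v / ∑ v', rbmWeight n m W C B v' :=
  rfl

theorem rbmDist_pos (n m : ℕ) (W : Matrix (Fin m) (Fin n) ℝ) (C : Fin m → ℝ) (B : Fin n → ℝ)
    (v : Fin n → Bool) : 0 < rbmDist n m W C B v :=
  div_pos (rbmWeight_pos ..) (sum_rbmWeight_pos ..)

theorem sum_rbmDist (n m : ℕ) (W : Matrix (Fin m) (Fin n) ℝ) (C : Fin m → ℝ) (B : Fin n → ℝ) :
    ∑ v, rbmDist n m W C B v = 1 := by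
  simp only [rbmDist_eq_rbmWeight_div, ← Finset.sum_div]
  exact div_self (sum_rbmWeight_pos ..).ne'

theorem rbmWeight_cons (n m : ℕ) (W : Matrix (Fin m) (Fin n) ℝ) (C : Fin m → ℝ) (B : Fin n → ℝ)
    (w : Fin n → ℝ) (c : ℝ) (v : Fin n → Bool) :
    rbmWeight n (m + 1) (Fin.cons w W) (Fin.cons c C) B v =
      (1 + Real.exp (c + ∑ i, w i * bval (v i))) * rbmWeight n m W C B v := by
  have hsplit : ∀ (b : Bool) (h : Fin m → Bool),
      Real.exp ((∑ j : Fin (m + 1), ∑ i, bval (Fin.cons (α := fun _ => Bool) b h j) *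
          (Fin.cons w W : Matrix (Fin (m + 1)) (Fin n) ℝ) j i * bval (v i)) +
        (∑ j : Fin (m + 1), (Fin.cons c C : Fin (m + 1) → ℝ) j *
          bval (Fin.cons (α := fun _ => Bool) b h j)) + (∑ i, B i * bval (v i))) =
      Real.exp (bval b * (c + ∑ i, w i * bval (v i))) *
        Real.exp ((∑ j, ∑ i, bval (h j) * W j i * bval (v i)) +
          (∑ j, C j * bval (h j)) + (∑ i, B i * bval (v i))) := by
    intro b h
    have hrow0 : ∀ i, (Fin.cons w W : Matrix (Fin (m + 1)) (Fin n) ℝ) 0 i = w i := fun _ => rfl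
    have hrow : ∀ j i, (Fin.cons w W : Matrix (Fin (m + 1)) (Fin n) ℝ) j.succ i = W j i :=
      fun _ _ => rfl
    rw [← Real.exp_add]
    simp only [Fin.sum_univ_succ, Fin.cons_zero, Fin.cons_succ, hrow0, hrow, mul_add,
      Finset.mul_sum, mul_assoc]
    ring_nf
  unfold rbmWeight
  rw [← Equiv.sum_comp (Fin.consEquiv fun _ => Bool), Fintype.sum_prod_type, Fintype.sum_bool]
  simp only [Fin.consEquiv_apply, hsplit, ← Finset.mul_sum]
  simp only [bval, if_true, Bool.false_eq_true, if_false, one_mul, zero_mul, Real.exp_zero]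
  ring

theorem rbmDist_cons (n m : ℕ) (W : Matrix (Fin m) (Fin n) ℝ) (C : Fin m → ℝ) (B : Fin n → ℝ)
    (w : Fin n → ℝ) (c : ℝ) :
    rbmDist n (m + 1) (Fin.cons w W) (Fin.cons c C) B = fun v =>
      rbmDist n m W C B v * (1 + Real.exp (c + ∑ i, w i * bval (v i))) /
        ∑ v', rbmDist n m W C B v' * (1 + Real.exp (c + ∑ i, w i * bval (v' i))) := by
  ext v
  change rbmWeight n (m + 1) (Fin.cons w W) (Fin.cons c C) B v /
    ∑ v', rbmWeight n (m + 1) (Fin.cons w W) (Fin.cons c C) B v' = _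
  simp only [rbmWeight_cons, rbmDist_eq_rbmWeight_div n m, mul_div_assoc', ← Finset.sum_div,
    div_div_div_cancel_right₀ (sum_rbmWeight_pos n m W C B).ne', mul_comm]

theorem rbmDist_mul_one_add_mem_RBM_succ {n m : ℕ} (W : Matrix (Fin m) (Fin n) ℝ)
    (C : Fin m → ℝ) (B : Fin n → ℝ) {q : (Fin n → Bool) → ℝ} (hq : q ∈ closure (expAffine n)) :
    (fun v => rbmDist n m W C B v * (1 + q v) / ∑ v', rbmDist n m W C B v' * (1 + q v')) ∈
      RBM n (m + 1) := by
  set Φ : ((Fin n → Bool) → ℝ) → (Fin n → Bool) → ℝ := fun q v =>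
    rbmDist n m W C B v * (1 + q v) / ∑ v', rbmDist n m W C B v' * (1 + q v')
  have hden : ∑ v', rbmDist n m W C B v' * (1 + q v') ≠ 0 :=
    (Finset.sum_pos (fun v' _ => mul_pos (rbmDist_pos ..)
      (by linarith [nonneg_of_mem_closure_expAffine hq v'])) Finset.univ_nonempty).ne'
  have hΦ : ContinuousAt Φ q := continuousAt_pi.2 fun v => ContinuousAt.div
    (continuous_const.mul (continuous_const.add (continuous_apply v))).continuousAt
    (continuous_finsetSum _ fun v' _ => by fun_prop).continuousAt hden
  have himage : Φ '' expAffine n ⊆ {p | ∃ W C B, p = rbmDist n (m + 1) W C B} := by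
    rintro _ ⟨q, ⟨c, w, hq⟩, rfl⟩
    refine ⟨Fin.cons w W, Fin.cons c C, B, ?_⟩
    rw [rbmDist_cons]
    simp only [Φ, hq]
  exact closure_mono himage (hΦ.continuousWithinAt.mem_closure_image hq)

theorem mixture_mem_RBM_succ_of_lt_one {n m : ℕ} (W : Matrix (Fin m) (Fin n) ℝ) (C : Fin m → ℝ)
    (B : Fin n → ℝ) {F : Set (Fin n → Bool)} {K : ℝ} {η : Fin n → ℝ}
    (hrestr : ∀ v ∈ F, rbmDist n m W C B v = K * Real.exp (∑ i, η i * bval (v i)))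
    {phat : (Fin n → Bool) → ℝ} (hprob : IsProb phat) (hprod : IsProductDist phat)
    (hsupp : ∀ x ∉ F, phat x = 0) {α : ℝ} (hα0 : 0 ≤ α) (hα1 : α < 1) :
    (fun v => (1 - α) * rbmDist n m W C B v + α * phat v) ∈ RBM n (m + 1) := by
  set p := rbmDist n m W C B
  obtain ⟨f, hf, hfprod⟩ := hprod
  have hK : 0 < K := by
    obtain ⟨v, -, hv⟩ := Finset.exists_ne_zero_of_sum_ne_zero (hprob.2.symm ▸ one_ne_zero)
    have hvF : v ∈ F := by_contra fun hvF => hv (hsupp v hvF)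
    have hpv : 0 < p v := rbmDist_pos ..
    exact pos_of_mul_pos_left (hrestr v hvF ▸ hpv) (Real.exp_pos _).le
  set l := α / (1 - α)
  have hl : 0 ≤ l := div_nonneg hα0 (by linarith)
  have hlα : l * (1 - α) = α := div_mul_cancel₀ α (by linarith)
  -- `q = l · p̂ / p`, in product form thanks to `p = K exp (η·v)` on `F ⊇ supp p̂`
  set q : (Fin n → Bool) → ℝ := fun v => l / K * ∏ i, f i (v i) * Real.exp (-(η i * bval (v i)))
  have hq : q ∈ closure (expAffine n) :=
    mem_closure_expAffine_of_nonneg (g := fun i b => f i b * Real.exp (-(η i * bval b)))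
      (div_nonneg hl hK.le) fun i b => mul_nonneg ((hf i).1 b) (Real.exp_pos _).le
  have hpq : ∀ v, p v * q v = l * phat v := by
    intro v
    have hqv : q v = l / K * (phat v / Real.exp (∑ i, η i * bval (v i))) := by
      simp only [q, Finset.prod_mul_distrib, Real.exp_neg, Finset.prod_inv_distrib,
        ← Real.exp_sum, hfprod, div_eq_mul_inv]
    by_cases hvF : v ∈ F
    · rw [hqv, hrestr v hvF]
      field_simp
    · simp [hqv, hsupp v hvF]
  have hmix : (fun v => (1 - α) * p v + α * phat v) =
      fun v => p v * (1 + q v) / ∑ v', p v' * (1 + q v') := by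
    have htotal : ∑ v', p v' * (1 + q v') = 1 + l := by
      simp only [mul_one_add, hpq, Finset.sum_add_distrib, ← Finset.mul_sum, hprob.2,
        p, sum_rbmDist, mul_one]
    ext v
    rw [htotal, mul_one_add, hpq, eq_div_iff (by linarith)]
    linear_combination (p v - phat v) * hlα
  rw [hmix]
  exact rbmDist_mul_one_add_mem_RBM_succ W C B hq

theorem append_hidden_unit_mixture_general (n m : ℕ)
    (W : Matrix (Fin m) (Fin n) ℝ) (C : Fin m → ℝ) (B : Fin n → ℝ)
    (p : (Fin n → Bool) → ℝ) (hpdef : p = rbmDist n m W C B)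
    (F : Set (Fin n → Bool))
    (K : ℝ) (η : Fin n → ℝ)
    (hrestr : ∀ v ∈ F, p v = K * Real.exp (∑ i, η i * bval (v i)))
    (phat : (Fin n → Bool) → ℝ)
    (hphat : IsProb phat ∧ IsProductDist phat ∧ ∀ x ∉ F, phat x = 0)
    (α : ℝ) (hα0 : 0 ≤ α) (hα1 : α ≤ 1) :
    (fun v => (1 - α) * p v + α * phat v) ∈ RBM n (m + 1) := by
  subst hpdef
  obtain ⟨hprob, hprod, hsupp⟩ := hphat
  have hIcc : Icc (0 : ℝ) 1 ⊆
      {β : ℝ | (fun v => (1 - β) * rbmDist n m W C B v + β * phat v) ∈ RBM n (m + 1)} := by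
    rw [← closure_Ico zero_ne_one]
    exact closure_minimal
      (fun β hβ => mixture_mem_RBM_succ_of_lt_one W C B hrestr hprob hprod hsupp hβ.1 hβ.2)
      (isClosed_closure.preimage (continuous_pi fun v => by fun_prop))
  exact hIcc ⟨hα0, hα1⟩

/-- Let `p = p_{W,C,B}` be the visible distribution of an RBM with `n`
visible and `m` hidden units, and let `F` be a face of the `n`-cube (with free coordinates
`I`) on which `p` restricts proportionally to a product distribution, i.e.
`p v = K·exp(η·v)` on `F` with `ηᵢ = 0` for `i ∉ I`. Then for every product distribution
`p̂` supported on `F` and every `α ∈ [0,1]`, the mixture `(1-α)·p + α·p̂` belongs to the RBM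
model with one additional hidden unit. -/
theorem append_hidden_unit_mixture (n m : ℕ)
    (W : Matrix (Fin m) (Fin n) ℝ) (C : Fin m → ℝ) (B : Fin n → ℝ)
    (p : (Fin n → Bool) → ℝ) (hpdef : p = rbmDist n m W C B)
    (I : Finset (Fin n)) (u : Fin n → Bool)
    (F : Set (Fin n → Bool)) (hFdef : F = {x | ∀ i ∉ I, x i = u i})
    (K : ℝ) (η : Fin n → ℝ) (hη : ∀ i ∉ I, η i = 0)
    (hrestr : ∀ v ∈ F, p v = K * Real.exp (∑ i, η i * bval (v i)))
    (phat : (Fin n → Bool) → ℝ)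
    (hphat : IsProb phat ∧ IsProductDist phat ∧ ∀ x ∉ F, phat x = 0)
    (α : ℝ) (hα0 : 0 ≤ α) (hα1 : α ≤ 1) :
    (fun v => (1 - α) * p v + α * phat v) ∈ RBM n (m + 1) :=
  append_hidden_unit_mixture_general n m W C B p hpdef F K η hrestr phat hphat α hα0 hα1
end
end
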